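/- arXiv:1908.10268 — 4 statements merged into one kernel-verified Lean document; each statement's English description precedes it below -/
import Mathlib

section
/- Let w₁ ≤ ⋯ ≤ w_N be the sorted weights of a multiset D of nonnegative reals, let H_i = Σ_{j≤i} w_j, and let Δ̂ ≥ 0. Then min{ H_i + (N−i)·Δ̂ : 0 ≤ i ≤ N } = Σ_{j=1}^N min(w_j, Δ̂), i.e., the recursive-mechanism expression equals the sum of the Δ̂-truncated weights. -/
open Finset

lemma aux_card_filter_lt (N i : ℕ) (hi : i ≤ N) :
    (Finset.univ.filter (fun j : Fin N => (j : ℕ) < i)).card = i := by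
  rw [Finset.card_filter]
  rw [Fin.sum_univ_eq_sum_range (fun j => if j < i then 1 else 0)]
  rw [Finset.sum_ite, Finset.sum_const, Finset.sum_const]
  have : (Finset.range N).filter (fun j => j < i) = Finset.range i := by
    ext k; simp; omega
  simp [this]

/-- For nondecreasingly sorted nonnegative weights `w₁ ≤ ⋯ ≤ w_N` with partial sums
`H_i = Σ_{j<i} w_j` (0-indexed), and a threshold `Δ̂ ≥ 0`,
`min_{0 ≤ i ≤ N} (H_i + (N−i)·Δ̂) = Σ_j min(w_j, Δ̂)`. -/
theorem recursive_min_eq_truncated_sum (N : ℕ) (w : Fin N → ℝ)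
    (hmono : Monotone w) (hnonneg : ∀ j, 0 ≤ w j) (Δ : ℝ) (hΔ : 0 ≤ Δ) :
    (Finset.range (N + 1)).inf' (by simp)
        (fun i => (∑ j : Fin N, if (j : ℕ) < i then w j else 0) + ((N : ℝ) - i) * Δ)
      = ∑ j : Fin N, min (w j) Δ := by
  classical
  -- rewrite each value as a single sum
  have hkey : ∀ i, i ≤ N →
      (∑ j : Fin N, if (j : ℕ) < i then w j else 0) + ((N : ℝ) - i) * Δ
        = ∑ j : Fin N, (if (j : ℕ) < i then w j else Δ) := by
    intro i hi
    have hsplit : ∀ j : Fin N, (if (j : ℕ) < i then w j else Δ)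
        = (if (j : ℕ) < i then w j else 0) + (if (j : ℕ) < i then 0 else Δ) := by
      intro j; by_cases h : (j : ℕ) < i <;> simp [h]
    rw [Finset.sum_congr rfl (fun j _ => hsplit j), Finset.sum_add_distrib]
    congr 1
    rw [Finset.sum_ite, Finset.sum_const, Finset.sum_const, smul_zero, zero_add,
      nsmul_eq_mul]
    have hc : (Finset.univ.filter (fun j : Fin N => ¬ (j : ℕ) < i)).card = N - i := by
      rw [Finset.filter_not, Finset.card_sdiff_of_subset (Finset.filter_subset _ _),
        Finset.card_univ, Fintype.card_fin, aux_card_filter_lt N i hi]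
    rw [hc]
    congr 1
    push_cast [Nat.cast_sub hi]
    ring
  set i₀ := (Finset.univ.filter (fun j : Fin N => w j < Δ)).card with hi₀
  have hi₀N : i₀ ≤ N := by
    simpa using Finset.card_filter_le Finset.univ (fun j : Fin N => w j < Δ)
  have hiff : ∀ j : Fin N, (j : ℕ) < i₀ ↔ w j < Δ := by
    intro j
    constructor
    · intro hj
      by_contra h
      push_neg at h
      have hsub : (Finset.univ.filter (fun k : Fin N => w k < Δ)) ⊆ Finset.Iio j := by
        intro k hk
        simp only [Finset.mem_filter] at hk
        simp only [Finset.mem_Iio]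
        by_contra hk'
        push_neg at hk'
        exact absurd (lt_of_lt_of_le hk.2 (le_trans h (hmono hk'))) (lt_irrefl _)
      have := Finset.card_le_card hsub
      rw [Fin.card_Iio] at this
      omega
    · intro hj
      have hsub : Finset.Iic j ⊆ (Finset.univ.filter (fun k : Fin N => w k < Δ)) := by
        intro k hk
        simp only [Finset.mem_filter, Finset.mem_univ, true_and]
        exact lt_of_le_of_lt (hmono (Finset.mem_Iic.mp hk)) hj
      have := Finset.card_le_card hsub
      rw [Fin.card_Iic] at this
      omega
  apply le_antisymm
  · -- inf' ≤ RHS, via i₀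
    have hmem : i₀ ∈ Finset.range (N + 1) := Finset.mem_range.mpr (by omega)
    refine le_trans (Finset.inf'_le _ hmem) ?_
    rw [hkey i₀ hi₀N]
    apply le_of_eq
    apply Finset.sum_congr rfl
    intro j _
    by_cases h : (j : ℕ) < i₀
    · simp [h, min_eq_left (le_of_lt ((hiff j).mp h))]
    · have : Δ ≤ w j := le_of_not_gt (fun hc => h ((hiff j).mpr hc))
      simp [h, min_eq_right this]
  · -- RHS ≤ inf'
    apply Finset.le_inf'
    intro i hi
    rw [hkey i (by simpa using Nat.lt_succ_iff.mp (Finset.mem_range.mp hi))]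
    apply Finset.sum_le_sum
    intro j _
    by_cases h : (j : ℕ) < i
    · simp [h, min_le_left]
    · simp [h, min_le_right]
end

section
/- For the truncation-aware matrix mechanism with output WT(x + (ΔA/ε) A⁺ b), where b has i.i.d. mean-zero variance-2 entries, the expected squared error of a single query row w against the true answer wDx is (w(D−T)x)² + (2(ΔA)²/ε²) · wT(AᵀA)⁻¹Tᵀwᵀ. -/
/-!
The error is `c - ⟪u, b⟫` with the deterministic bias `c = w(D - T)x` and
`u = (ΔA/ε) · wTA⁺`. Its second moment is `c² + Var⟪u, b⟫`, and by independence
`Var⟪u, b⟫ = 2‖u‖²`. Finally `‖wTA⁺‖² = wT(A⁺A⁺ᵀ)Tᵀwᵀ` and `A⁺A⁺ᵀ = (AᵀA)⁻¹`.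
-/

open MeasureTheory ProbabilityTheory Matrix

/-- Also true for singular `G`, where `G⁻¹ = 0`. -/
theorem Matrix.nonsing_inv_mul_mul_nonsing_inv {n α : Type*} [Fintype n] [DecidableEq n]
    [CommRing α] (G : Matrix n n α) : G⁻¹ * G * G⁻¹ = G⁻¹ := by
  by_cases hG : IsUnit G.det
  · rw [nonsing_inv_mul G hG, Matrix.one_mul]
  · simp [nonsing_inv_apply_not_isUnit G hG]

theorem Matrix.vecMul_dotProduct_vecMul_self {m n R : Type*} [Fintype m] [Fintype n]
    [CommSemiring R] (N : Matrix m n R) (w : m → R) : w ᵥ* N ⬝ᵥ w ᵥ* N = w ⬝ᵥ (N * Nᵀ) *ᵥ w := by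
  rw [← mulVec_mulVec, dotProduct_mulVec, mulVec_transpose]

theorem Matrix.pinv_mul_pinv_transpose {m n K : Type*} [Fintype m] [Fintype n] [DecidableEq n]
    [CommRing K] (A : Matrix m n K) : (Aᵀ * A)⁻¹ * Aᵀ * ((Aᵀ * A)⁻¹ * Aᵀ)ᵀ = (Aᵀ * A)⁻¹ := by
  rw [transpose_mul, transpose_nonsing_inv, transpose_mul, transpose_transpose]
  simpa only [Matrix.mul_assoc] using (Aᵀ * A).nonsing_inv_mul_mul_nonsing_inv

namespace ProbabilityTheory

variable {Ω ι : Type*} [MeasurableSpace Ω] {μ : Measure Ω}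

lemma integral_sq_eq_variance_add_sq [IsProbabilityMeasure μ] {X : Ω → ℝ} (hX : MemLp X 2 μ) :
    ∫ ω, X ω ^ 2 ∂μ = Var[X; μ] + (∫ ω, X ω ∂μ) ^ 2 := by
  rw [variance_eq_sub hX]
  simp only [Pi.pow_apply]
  ring

variable [Fintype ι] {b : ι → Ω → ℝ}

lemma variance_dotProduct_of_iIndepFun (hindep : iIndepFun b μ) (hL2 : ∀ j, MemLp (b j) 2 μ)
    (u : ι → ℝ) : Var[fun ω ↦ u ⬝ᵥ fun j ↦ b j ω; μ] = ∑ j, u j ^ 2 * Var[b j; μ] := by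
  have hsum : (fun ω ↦ u ⬝ᵥ fun j ↦ b j ω) = ∑ j, u j • b j := by
    ext ω; simp [dotProduct]
  rw [hsum, IndepFun.variance_sum (fun j _ ↦ (hL2 j).const_smul (u j))]
  · simp only [variance_smul]
  · intro i _ j _ hij
    exact (hindep.indepFun hij).comp (measurable_const_smul (u i)) (measurable_const_smul (u j))

lemma integral_sq_const_sub_dotProduct [IsProbabilityMeasure μ] (hindep : iIndepFun b μ)
    (hL2 : ∀ j, MemLp (b j) 2 μ) (hmean : ∀ j, ∫ ω, b j ω ∂μ = 0) {σ2 : ℝ}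
    (hvar : ∀ j, ∫ ω, b j ω ^ 2 ∂μ = σ2)
    (c : ℝ) (u : ι → ℝ) :
    ∫ ω, (c - u ⬝ᵥ fun j ↦ b j ω) ^ 2 ∂μ = c ^ 2 + σ2 * (u ⬝ᵥ u) := by
  have hS : MemLp (fun ω ↦ u ⬝ᵥ fun j ↦ b j ω) 2 μ := by
    simpa only [dotProduct] using memLp_finsetSum Finset.univ fun j _ ↦ (hL2 j).const_mul (u j)
  have hS_mean : ∫ ω, (u ⬝ᵥ fun j ↦ b j ω) ∂μ = 0 := by
    simp only [dotProduct]
    rw [integral_finsetSum _ fun j _ ↦ ((hL2 j).integrable one_le_two).const_mul (u j)]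
    simp [integral_const_mul, hmean]
  have hb_var : ∀ j, Var[b j; μ] = σ2 := fun j ↦ by
    simpa [hvar j, hmean j] using (integral_sq_eq_variance_add_sq (hL2 j)).symm
  have hY : MemLp (fun ω ↦ c - u ⬝ᵥ fun j ↦ b j ω) 2 μ := (memLp_const c).sub hS
  rw [integral_sq_eq_variance_add_sq hY, variance_const_sub hS.aestronglyMeasurable,
    variance_dotProduct_of_iIndepFun hindep hL2, integral_sub (integrable_const c)
    (hS.integrable one_le_two), hS_mean]
  have hsum : ∑ j, u j ^ 2 * Var[b j; μ] = σ2 * (u ⬝ᵥ u) := by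
    simp only [hb_var, dotProduct, Finset.mul_sum, sq, mul_comm]
  rw [hsum, integral_const, probReal_univ, one_smul, sub_zero, add_comm]

end ProbabilityTheory

theorem TaMM_single_query_error_general
    {Ω : Type*} [MeasurableSpace Ω] (μ : Measure Ω) [IsProbabilityMeasure μ]
    {m n : ℕ} (b : Fin m → Ω → ℝ)
    (hindep : ProbabilityTheory.iIndepFun b μ)
    (hL2 : ∀ j, MemLp (b j) 2 μ)
    (hmean : ∀ j, ∫ ω, b j ω ∂μ = 0)
    (hvar : ∀ j, ∫ ω, (b j ω) ^ 2 ∂μ = 2)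
    (x : Fin n → ℝ) (D T : Matrix (Fin n) (Fin n) ℝ) (w : Fin n → ℝ)
    (A : Matrix (Fin m) (Fin n) ℝ)
    (ΔA ε : ℝ) :
    ∫ ω, ((w ⬝ᵥ (D *ᵥ x)) -
          (w ⬝ᵥ (T *ᵥ (x + (ΔA / ε) • (((Aᵀ * A)⁻¹ * Aᵀ) *ᵥ fun j => b j ω))))) ^ 2 ∂μ
      = (w ⬝ᵥ ((D - T) *ᵥ x)) ^ 2
        + (2 * ΔA ^ 2 / ε ^ 2) * (w ⬝ᵥ ((T * (Aᵀ * A)⁻¹ * Tᵀ) *ᵥ w)) := by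
  set N := T * ((Aᵀ * A)⁻¹ * Aᵀ)
  have herr : ∀ ω, w ⬝ᵥ D *ᵥ x - w ⬝ᵥ T *ᵥ (x + (ΔA / ε) • ((Aᵀ * A)⁻¹ * Aᵀ) *ᵥ fun j ↦ b j ω)
      = w ⬝ᵥ (D - T) *ᵥ x - ((ΔA / ε) • w ᵥ* N) ⬝ᵥ fun j ↦ b j ω := by
    intro ω
    rw [mulVec_add, mulVec_smul, mulVec_mulVec, sub_mulVec, dotProduct_add, dotProduct_smul,
      dotProduct_sub, smul_dotProduct, ← dotProduct_mulVec, smul_eq_mul]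
    ring
  have hgram : N * Nᵀ = T * (Aᵀ * A)⁻¹ * Tᵀ := by
    rw [transpose_mul, Matrix.mul_assoc, ← Matrix.mul_assoc _ _ Tᵀ, pinv_mul_pinv_transpose,
      Matrix.mul_assoc]
  simp_rw [herr]
  rw [integral_sq_const_sub_dotProduct hindep hL2 hmean hvar, smul_dotProduct, dotProduct_smul,
    vecMul_dotProduct_vecMul_self, hgram, smul_eq_mul, smul_eq_mul]
  ring

/-- Expected squared error of the truncation-aware matrix mechanism
`WT(x + (ΔA/ε) A⁺ b)` for a single query row `w` against the true answer `wDx`: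
`(w(D−T)x)² + (2(ΔA)²/ε²) · wT(AᵀA)⁻¹Tᵀwᵀ`. -/
theorem TaMM_single_query_error
    {Ω : Type*} [MeasurableSpace Ω] (μ : Measure Ω) [IsProbabilityMeasure μ]
    {m n : ℕ} (b : Fin m → Ω → ℝ)
    (hmeas : ∀ j, Measurable (b j))
    (hindep : ProbabilityTheory.iIndepFun b μ)
    (hL2 : ∀ j, MemLp (b j) 2 μ)
    (hmean : ∀ j, ∫ ω, b j ω ∂μ = 0)
    (hvar : ∀ j, ∫ ω, (b j ω) ^ 2 ∂μ = 2)
    (x : Fin n → ℝ) (D T : Matrix (Fin n) (Fin n) ℝ) (w : Fin n → ℝ)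
    (A : Matrix (Fin m) (Fin n) ℝ) (hA : Invertible (Aᵀ * A))
    (ΔA ε : ℝ) (hΔA : 0 < ΔA) (hε : 0 < ε) :
    ∫ ω, ((w ⬝ᵥ (D *ᵥ x)) -
          (w ⬝ᵥ (T *ᵥ (x + (ΔA / ε) • (((Aᵀ * A)⁻¹ * Aᵀ) *ᵥ fun j => b j ω))))) ^ 2 ∂μ
      = (w ⬝ᵥ ((D - T) *ᵥ x)) ^ 2
        + (2 * ΔA ^ 2 / ε ^ 2) * (w ⬝ᵥ ((T * (Aᵀ * A)⁻¹ * Tᵀ) *ᵥ w)) :=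
  TaMM_single_query_error_general μ b hindep hL2 hmean hvar x D T w A ΔA ε
end

section
/- For the truncation-independent matrix mechanism with output for query row w given by wTx + (Δ(AT)/ε) w A⁺ b, where b has i.i.d. mean-zero variance-2 entries, the expected squared error against the true answer wDx equals (w(D−T)x)² + (2Δ(AT)²/ε²) · w(AᵀA)⁻¹wᵀ. -/
open MeasureTheory Matrix ProbabilityTheory

/-!
The error splits as `c - S` with the deterministic bias `c = w(D - T)x` and the centred noise
`S = (Δ(AT)/ε) · u ⬝ b`, where `u = w A⁺`. Hence its second moment is `c² + Var S`. The entries of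
`b` are independent with variance `2`, so `Var S = 2 (Δ(AT)/ε)² ‖u‖²`, and
`‖u‖² = w A⁺ (A⁺)ᵀ wᵀ = w (AᵀA)⁻¹ wᵀ` because `A⁺ (A⁺)ᵀ = (AᵀA)⁻¹ AᵀA (AᵀA)⁻¹`.
-/

namespace ProbabilityTheory

variable {Ω : Type*} [MeasurableSpace Ω] {μ : Measure Ω}

lemma integral_const_sub_sq [IsProbabilityMeasure μ] {Y : Ω → ℝ} (hY : MemLp Y 2 μ) (a : ℝ) :
    ∫ ω, (a - Y ω) ^ 2 ∂μ = (a - μ[Y]) ^ 2 + Var[Y; μ] := by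
  have hY' : MemLp (fun ω ↦ a - Y ω) 2 μ := (memLp_const a).sub hY
  have hmean : ∫ ω, (a - Y ω) ∂μ = a - μ[Y] := by
    rw [integral_sub (integrable_const a) (hY.integrable one_le_two), integral_const]
    simp
  rw [← variance_const_sub hY.aestronglyMeasurable a, variance_eq_sub hY', ← hmean]
  simp only [Pi.pow_apply]
  ring

lemma iIndepFun.variance_sum_const_mul {ι : Type*} [Fintype ι] {X : ι → Ω → ℝ}
    (hindep : iIndepFun X μ) (hX : ∀ i, MemLp (X i) 2 μ) (c : ι → ℝ) :
    Var[fun ω ↦ ∑ i, c i * X i ω; μ] = ∑ i, c i ^ 2 * Var[X i; μ] := by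
  have hsum : (fun ω ↦ ∑ i, c i * X i ω) = ∑ i, fun ω ↦ c i * X i ω := by
    ext ω; simp
  rw [hsum, IndepFun.variance_sum (fun i _ ↦ (hX i).const_mul (c i))]
  · simp only [variance_const_mul]
  · intro i _ j _ hij
    exact (hindep.indepFun hij).comp (measurable_const_mul (c i)) (measurable_const_mul (c j))

end ProbabilityTheory

namespace Matrix

variable {R : Type*} [CommRing R] {m n : Type*} [Fintype m] [Fintype n]

lemma vecMul_dotProduct_vecMul_self_s8 (M : Matrix n m R) (w : n → R) :
    (w ᵥ* M) ⬝ᵥ (w ᵥ* M) = w ⬝ᵥ ((M * Mᵀ) *ᵥ w) := by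
  rw [← mulVec_mulVec, dotProduct_mulVec, mulVec_transpose]

lemma leftInverse_mul_transpose [DecidableEq n] (A : Matrix m n R) [Invertible (Aᵀ * A)] :
    ((Aᵀ * A)⁻¹ * Aᵀ) * ((Aᵀ * A)⁻¹ * Aᵀ)ᵀ = (Aᵀ * A)⁻¹ := by
  rw [transpose_mul, transpose_transpose, transpose_nonsing_inv, transpose_mul,
    transpose_transpose, Matrix.mul_assoc, ← Matrix.mul_assoc Aᵀ, mul_inv_of_invertible,
    Matrix.mul_one]

end Matrix

theorem TiMM_single_query_error_general
    {Ω : Type*} [MeasurableSpace Ω] (μ : Measure Ω) [IsProbabilityMeasure μ]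
    {m n : ℕ} (b : Fin m → Ω → ℝ)
    (hindep : ProbabilityTheory.iIndepFun b μ)
    (hL2 : ∀ j, MemLp (b j) 2 μ)
    (hmean : ∀ j, ∫ ω, b j ω ∂μ = 0)
    (hvar : ∀ j, ∫ ω, (b j ω) ^ 2 ∂μ = 2)
    (x : Fin n → ℝ) (D T : Matrix (Fin n) (Fin n) ℝ) (w : Fin n → ℝ)
    (A : Matrix (Fin m) (Fin n) ℝ) (hA : Invertible (Aᵀ * A))
    (ΔAT ε : ℝ) :
    ∫ ω, ((w ⬝ᵥ (D *ᵥ x)) -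
          ((w ⬝ᵥ (T *ᵥ x)) +
            (ΔAT / ε) * (w ⬝ᵥ (((Aᵀ * A)⁻¹ * Aᵀ) *ᵥ fun j => b j ω)))) ^ 2 ∂μ
      = (w ⬝ᵥ ((D - T) *ᵥ x)) ^ 2
        + (2 * ΔAT ^ 2 / ε ^ 2) * (w ⬝ᵥ ((Aᵀ * A)⁻¹ *ᵥ w)) := by
  set u := w ᵥ* ((Aᵀ * A)⁻¹ * Aᵀ)
  set S : Ω → ℝ := fun ω ↦ ∑ j, (ΔAT / ε * u j) * b j ω
  have hS : MemLp S 2 μ := memLp_finsetSum _ fun j _ ↦ (hL2 j).const_mul _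
  have hS_mean : μ[S] = 0 := by
    simp [S, integral_finsetSum _ fun j _ ↦ ((hL2 j).integrable one_le_two).const_mul _,
      integral_const_mul, hmean]
  have hb_var : ∀ j, Var[b j; μ] = 2 := fun j ↦ by
    simp [variance_eq_sub (hL2 j), hvar, hmean]
  have hS_var : Var[S; μ] = 2 * (ΔAT / ε) ^ 2 * (u ⬝ᵥ u) := by
    simp only [S, hindep.variance_sum_const_mul hL2, hb_var, dotProduct, Finset.mul_sum]
    exact Finset.sum_congr rfl fun j _ ↦ by ring
  have herror : ∀ ω, w ⬝ᵥ (D *ᵥ x) - (w ⬝ᵥ (T *ᵥ x)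
      + ΔAT / ε * (w ⬝ᵥ (((Aᵀ * A)⁻¹ * Aᵀ) *ᵥ fun j => b j ω))) = w ⬝ᵥ ((D - T) *ᵥ x) - S ω := by
    intro ω
    rw [dotProduct_mulVec w ((Aᵀ * A)⁻¹ * Aᵀ), sub_mulVec, dotProduct_sub]
    simp only [S, u, dotProduct, Finset.mul_sum, mul_assoc]
    ring
  simp_rw [herror, integral_const_sub_sq hS, hS_mean, hS_var, u,
    vecMul_dotProduct_vecMul_self_s8, leftInverse_mul_transpose]
  ring

/-- Expected squared error of the truncation-independent matrix mechanism output
`wTx + (Δ(AT)/ε) w A⁺ b` against the true answer `wDx`: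
`(w(D−T)x)² + (2Δ(AT)²/ε²) · w(AᵀA)⁻¹wᵀ`. -/
theorem TiMM_single_query_error
    {Ω : Type*} [MeasurableSpace Ω] (μ : Measure Ω) [IsProbabilityMeasure μ]
    {m n : ℕ} (b : Fin m → Ω → ℝ)
    (hmeas : ∀ j, Measurable (b j))
    (hindep : ProbabilityTheory.iIndepFun b μ)
    (hL2 : ∀ j, MemLp (b j) 2 μ)
    (hmean : ∀ j, ∫ ω, b j ω ∂μ = 0)
    (hvar : ∀ j, ∫ ω, (b j ω) ^ 2 ∂μ = 2)
    (x : Fin n → ℝ) (D T : Matrix (Fin n) (Fin n) ℝ) (w : Fin n → ℝ)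
    (A : Matrix (Fin m) (Fin n) ℝ) (hA : Invertible (Aᵀ * A))
    (ΔAT ε : ℝ) (hΔAT : 0 < ΔAT) (hε : 0 < ε) :
    ∫ ω, ((w ⬝ᵥ (D *ᵥ x)) -
          ((w ⬝ᵥ (T *ᵥ x)) +
            (ΔAT / ε) * (w ⬝ᵥ (((Aᵀ * A)⁻¹ * Aᵀ) *ᵥ fun j => b j ω)))) ^ 2 ∂μ
      = (w ⬝ᵥ ((D - T) *ᵥ x)) ^ 2
        + (2 * ΔAT ^ 2 / ε ^ 2) * (w ⬝ᵥ ((Aᵀ * A)⁻¹ *ᵥ w)) :=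
  TiMM_single_query_error_general μ b hindep hL2 hmean hvar x D T w A hA ΔAT ε
end

section
/- Let x ∈ ℝⁿ be the histogram vector of a multiset D with respect to buckets (l₁,u₁],…,(l_n,u_n] covering the weights, T = diag(min(u₁,θ),…,min(u_n,θ)), and W the prefix workload matrix. Then the vectorized truncated answer (WTx)_i over-approximates the exact truncated prefix sum: Trunc_θ(q_{u_i})(D) ≤ (WTx)_i ≤ Trunc_θ(q_{u_i})(D_max), where D_max is the multiset obtained by rounding every element of D up to the upper endpoint of its bucket. -/
/-- Truncated prefix sum query: `Trunc_θ(q_i)(D) = Σ_{t∈D, t≤i} min(t, θ)`. -/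
def truncPrefixSum (θ i : ℕ) (D : Multiset ℕ) : ℕ :=
  ((D.filter (fun t => t ≤ i)).map (fun t => min t θ)).sum

/-- Lower endpoint of the `j`-th bucket: `l_j = u_{j-1}` with `l_0 = 0`. -/
def lowerEndpoint {n : ℕ} (u : Fin n → ℕ) (j : Fin n) : ℕ :=
  if _ : (j : ℕ) = 0 then 0
  else u ⟨(j : ℕ) - 1, lt_of_le_of_lt (Nat.pred_le _) j.isLt⟩

/-- Histogram vector: number of elements of `D` in bucket `(l_j, u_j]`. -/
def bucketCount {n : ℕ} (u : Fin n → ℕ) (D : Multiset ℕ) (j : Fin n) : ℕ :=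
  (D.filter (fun t => lowerEndpoint u j < t ∧ t ≤ u j)).card

/-- Round a value up to the upper endpoint of its bucket: the least `u_j ≥ t`
(defaulting to the largest endpoint). -/
def roundUp {n : ℕ} (hn : 0 < n) (u : Fin n → ℕ) (t : ℕ) : ℕ :=
  Finset.univ.inf' (Finset.univ_nonempty_iff.mpr ⟨⟨0, hn⟩⟩)
    (fun j => if t ≤ u j then u j else u ⟨n - 1, Nat.sub_lt hn one_pos⟩)

/-! A value `t` with `0 < t ≤ u (n - 1)` lies in exactly one bucket, the one of least index `j`
with `t ≤ u j`; `roundUp` sends it to `u j`, and `t ≤ u i ↔ j ≤ i`. So each element of `D`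
contributes `min (u j) θ` to the vectorized sum exactly when its rounded value contributes to
the truncated prefix sum of `D_max`: the upper bound is an equality. The lower bound holds
termwise, because rounding up increases `t` without crossing any `u i`. -/

theorem Multiset.sum_map_filter_eq_sum_map_ite {α M : Type*} [AddCommMonoid M]
    (s : Multiset α) (p : α → Prop) [DecidablePred p] (f : α → M) :
    ((s.filter p).map f).sum = (s.map fun a => if p a then f a else 0).sum := by
  induction s using Multiset.induction_on with
  | empty => simp
  | cons a s ih => by_cases h : p a <;> simp [h, ih]

lemma truncPrefixSum_eq_sum_map (θ m : ℕ) (D : Multiset ℕ) :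
    truncPrefixSum θ m D = (D.map fun t => if t ≤ m then min t θ else 0).sum :=
  Multiset.sum_map_filter_eq_sum_map_ite ..

lemma bucketCount_eq_sum_map {n : ℕ} (u : Fin n → ℕ) (D : Multiset ℕ) (j : Fin n) :
    bucketCount u D j =
      (D.map fun t => if lowerEndpoint u j < t ∧ t ≤ u j then 1 else 0).sum := by
  rw [bucketCount, ← Multiset.sum_map_filter_eq_sum_map_ite]
  simp

lemma truncPrefixSum_le_truncPrefixSum_map (θ m : ℕ) {D : Multiset ℕ} {f : ℕ → ℕ}
    (hf : ∀ t ∈ D, t ≤ f t ∧ (t ≤ m → f t ≤ m)) :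
    truncPrefixSum θ m D ≤ truncPrefixSum θ m (D.map f) := by
  rw [truncPrefixSum_eq_sum_map, truncPrefixSum_eq_sum_map, Multiset.map_map]
  refine Multiset.sum_map_le_sum_map _ _ fun t ht => ?_
  obtain ⟨hle, hm⟩ := hf t ht
  dsimp only [Function.comp]
  split_ifs with h₁ h₂
  · exact min_le_min_right θ hle
  · exact absurd (hm h₁) h₂
  · exact Nat.zero_le _
  · exact le_rfl

section Buckets

variable {n : ℕ} {u : Fin n → ℕ} {t : ℕ} {j : Fin n}

lemma lowerEndpoint_lt_iff (hu : Monotone u) :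
    lowerEndpoint u j < t ↔ 0 < t ∧ ∀ k < j, u k < t := by
  unfold lowerEndpoint
  split_ifs with hj0
  · have : ∀ k, ¬k < j := fun k hk => by simp [Fin.lt_def, hj0] at hk
    simp [this]
  · set p : Fin n := ⟨j - 1, _⟩
    have hp : p < j := Fin.lt_def.2 (by dsimp [p]; omega)
    have hle : ∀ k < j, k ≤ p := fun k hk => Fin.le_def.2 (by dsimp [p]; omega)
    exact ⟨fun h => ⟨(Nat.zero_le _).trans_lt h, fun k hk => (hu (hle k hk)).trans_lt h⟩,
      fun h => h.2 p hp⟩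

lemma exists_forall_lt_of_le {k : Fin n} (hk : t ≤ u k) :
    ∃ j, t ≤ u j ∧ ∀ k < j, u k < t := by
  obtain ⟨j, hj, hmin⟩ := wellFounded_lt.has_min {j | t ≤ u j} ⟨k, hk⟩
  exact ⟨j, hj, fun k hkj => lt_of_not_ge fun h => hmin k h hkj⟩

lemma le_iff_le_of_forall_lt (hu : Monotone u) (hj : t ≤ u j) (hmin : ∀ k < j, u k < t)
    (i : Fin n) : j ≤ i ↔ t ≤ u i :=
  ⟨fun h => hj.trans (hu h), fun h => le_of_not_gt fun hij => (hmin i hij).not_ge h⟩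

lemma roundUp_eq_of_forall_lt (hn : 0 < n) (hu : Monotone u) (hj : t ≤ u j)
    (hmin : ∀ k < j, u k < t) : roundUp hn u t = u j := by
  have hj_le : ∀ k, t ≤ u k → u j ≤ u k := fun k hk =>
    hu ((le_iff_le_of_forall_lt hu hj hmin k).2 hk)
  refine le_antisymm (Finset.inf'_le_of_le _ (Finset.mem_univ j) (by simp [hj])) ?_
  refine Finset.le_inf' _ _ fun k _ => ?_
  split_ifs with hk
  · exact hj_le k hk
  · exact hu (Fin.le_def.2 (by dsimp; omega))

lemma le_roundUp (hn : 0 < n) (htop : t ≤ u ⟨n - 1, Nat.sub_lt hn one_pos⟩) :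
    t ≤ roundUp hn u t :=
  Finset.le_inf' _ _ fun k _ => by split_ifs with hk <;> assumption

lemma roundUp_le_of_le (hn : 0 < n) {i : Fin n} (h : t ≤ u i) : roundUp hn u t ≤ u i :=
  Finset.inf'_le_of_le _ (Finset.mem_univ i) (by simp [h])

lemma lowerEndpoint_lt_and_le_iff (hu : Monotone u) (ht : 0 < t) {j₀ : Fin n}
    (hj₀ : t ≤ u j₀) (hmin₀ : ∀ k < j₀, u k < t) : lowerEndpoint u j < t ∧ t ≤ u j ↔ j = j₀ := by
  rw [lowerEndpoint_lt_iff hu]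
  refine ⟨fun ⟨⟨_, hmin⟩, hj⟩ => ?_, fun h => h ▸ ⟨⟨ht, hmin₀⟩, hj₀⟩⟩
  rcases lt_trichotomy j j₀ with h | h | h
  · exact absurd hj (hmin₀ j h).not_ge
  · exact h
  · exact absurd hj₀ (hmin j₀ h).not_ge

lemma sum_weight_mul_bucket_indicator (hn : 0 < n) (hu : Monotone u) (ht : 0 < t)
    (htop : t ≤ u ⟨n - 1, Nat.sub_lt hn one_pos⟩) (θ : ℕ) (i : Fin n) :
    ∑ j, (if j ≤ i then min (u j) θ else 0) *
        (if lowerEndpoint u j < t ∧ t ≤ u j then 1 else 0) =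
      if roundUp hn u t ≤ u i then min (roundUp hn u t) θ else 0 := by
  obtain ⟨j₀, hj₀, hmin₀⟩ := exists_forall_lt_of_le htop
  have hle : u j₀ ≤ u i ↔ j₀ ≤ i :=
    ⟨fun h => (le_iff_le_of_forall_lt hu hj₀ hmin₀ i).2 (hj₀.trans h), fun h => hu h⟩
  simp only [roundUp_eq_of_forall_lt hn hu hj₀ hmin₀, hle,
    lowerEndpoint_lt_and_le_iff hu ht hj₀ hmin₀, mul_ite, mul_one, mul_zero,
    Finset.sum_ite_eq', Finset.mem_univ, if_true]

end Buckets

lemma sum_weight_mul_bucketCount_eq_truncPrefixSum_map_roundUp {n : ℕ} (hn : 0 < n)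
    {u : Fin n → ℕ} (hu : Monotone u) {D : Multiset ℕ}
    (hD : ∀ t ∈ D, 0 < t ∧ t ≤ u ⟨n - 1, Nat.sub_lt hn one_pos⟩) (θ : ℕ) (i : Fin n) :
    (∑ j : Fin n, if j ≤ i then min (u j) θ * bucketCount u D j else 0) =
      truncPrefixSum θ (u i) (D.map (roundUp hn u)) := by
  calc (∑ j : Fin n, if j ≤ i then min (u j) θ * bucketCount u D j else 0)
      = ∑ j : Fin n, (if j ≤ i then min (u j) θ else 0) * bucketCount u D j := by
        simp only [ite_zero_mul]
    _ = (D.map fun t => ∑ j : Fin n, (if j ≤ i then min (u j) θ else 0) *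
          (if lowerEndpoint u j < t ∧ t ≤ u j then 1 else 0)).sum := by
        simp only [bucketCount_eq_sum_map, ← Multiset.sum_map_mul_left, Multiset.sum_map_sum]
    _ = (D.map fun t => if roundUp hn u t ≤ u i then min (roundUp hn u t) θ else 0).sum :=
        congrArg Multiset.sum <| Multiset.map_congr rfl fun t ht =>
          sum_weight_mul_bucket_indicator hn hu (hD t ht).1 (hD t ht).2 θ i
    _ = truncPrefixSum θ (u i) (D.map (roundUp hn u)) := by
        rw [truncPrefixSum_eq_sum_map, Multiset.map_map]; rfl

/-- The vectorized truncated answer `(WTx)_i = Σ_{j≤i} min(u_j,θ)·x_j` sandwiches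
between the exact truncated prefix sum on `D` and on `D_max` (each element of `D`
rounded up to its bucket's upper endpoint). -/
theorem vectorized_trunc_bounds {n : ℕ} (hn : 0 < n) (u : Fin n → ℕ)
    (hu : StrictMono u) (D : Multiset ℕ)
    (hD : ∀ t ∈ D, 1 ≤ t ∧ t ≤ u ⟨n - 1, Nat.sub_lt hn one_pos⟩)
    (θ : ℕ) (i : Fin n) :
    truncPrefixSum θ (u i) D ≤
        (∑ j : Fin n, if j ≤ i then min (u j) θ * bucketCount u D j else 0) ∧
    (∑ j : Fin n, if j ≤ i then min (u j) θ * bucketCount u D j else 0) ≤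
        truncPrefixSum θ (u i) (D.map (roundUp hn u)) := by
  rw [sum_weight_mul_bucketCount_eq_truncPrefixSum_map_roundUp hn hu.monotone hD]
  refine ⟨truncPrefixSum_le_truncPrefixSum_map θ (u i) fun t ht => ?_, le_rfl⟩
  exact ⟨le_roundUp hn (hD t ht).2, roundUp_le_of_le hn⟩
end
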